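/- arXiv:1809.02632 — 3 statements merged into one kernel-verified Lean document; each statement's English description precedes it below -/
import Mathlib

section
/- Let R be a 4-linear curvature-type tensor on (V,g,J) that is skew-symmetric in the first two arguments and in the last two arguments. Then R satisfies both the first Bianchi identity and the type condition if and only if both of the following hold: (1Bnc') R(X,conj(Y),Z,conj(W)) = R(Z,conj(Y),X,conj(W)) for all vectors X,Y,Z,W of type (1,0); and (Cplx') R(x,y,Z,W) = 0 and R(X,Y,z,w) = 0 for all x,y,z,w in the complexification and all vectors X,Y,Z,W of type (1,0). -/
noncomputable def pPart {Vc : Type*} [AddCommGroup Vc] [Module ℂ Vc]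
    (J : Vc →ₗ[ℂ] Vc) (v : Vc) : Vc := (2⁻¹ : ℂ) • (v - Complex.I • J v)

noncomputable def qPart {Vc : Type*} [AddCommGroup Vc] [Module ℂ Vc]
    (J : Vc →ₗ[ℂ] Vc) (v : Vc) : Vc := (2⁻¹ : ℂ) • (v + Complex.I • J v)

lemma pPart_add_qPart {Vc : Type*} [AddCommGroup Vc] [Module ℂ Vc]
    (J : Vc →ₗ[ℂ] Vc) (v : Vc) : pPart J v + qPart J v = v := by
  simp only [pPart, qPart]; module

lemma J_pPart {Vc : Type*} [AddCommGroup Vc] [Module ℂ Vc]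
    (J : Vc →ₗ[ℂ] Vc) (hJ2 : ∀ x, J (J x) = -x) (v : Vc) :
    J (pPart J v) = Complex.I • pPart J v := by
  simp only [pPart, map_smul, map_sub, hJ2]
  match_scalars <;> simp [Complex.ext_iff]

lemma J_qPart {Vc : Type*} [AddCommGroup Vc] [Module ℂ Vc]
    (J : Vc →ₗ[ℂ] Vc) (hJ2 : ∀ x, J (J x) = -x) (v : Vc) :
    J (qPart J v) = -(Complex.I • qPart J v) := by
  simp only [qPart, map_smul, map_add, hJ2]
  match_scalars <;> simp [Complex.ext_iff]


lemma pureBianchi {Vc : Type*} [AddCommGroup Vc] [Module ℂ Vc]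
    (R : Vc →ₗ[ℂ] Vc →ₗ[ℂ] Vc →ₗ[ℂ] Vc →ₗ[ℂ] ℂ)
    (P M : Vc → Prop)
    (hskew12 : ∀ x y z w, R x y z w = - R y x z w)
    (z12P : ∀ X Y z w, P X → P Y → R X Y z w = 0)
    (z12M : ∀ X Y z w, M X → M Y → R X Y z w = 0)
    (z34P : ∀ x y Z W, P Z → P W → R x y Z W = 0)
    (z34M : ∀ x y Z W, M Z → M W → R x y Z W = 0)
    (bP : ∀ A B C D, P A → M B → P C → M D → R A B C D = R C B A D)
    (bM : ∀ A B C D, M A → P B → M C → P D → R A B C D = R C B A D)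
    (a b c d : Vc) (ha : P a ∨ M a) (hb : P b ∨ M b) (hc : P c ∨ M c) (hd : P d ∨ M d) :
    R a b c d + R b c a d + R c a b d = 0 := by
  rcases ha with pa | ma <;> rcases hb with pb | mb <;> rcases hc with pc | mc <;>
    rcases hd with pd | md
  · linear_combination z12P a b c d pa pb + z12P b c a d pb pc + z12P c a b d pc pa
  · linear_combination z12P a b c d pa pb + z12P b c a d pb pc + z12P c a b d pc pa
  · linear_combination z12P a b c d pa pb + z34P b c a d pa pd + z34P c a b d pb pd
  · linear_combination z12P a b c d pa pb + bP b c a d pb mc pa md + hskew12 a c b d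
  · linear_combination z34P a b c d pc pd + z34P b c a d pa pd + z12P c a b d pc pa
  · linear_combination z12P c a b d pc pa + bP a b c d pa mb pc md + hskew12 c b a d
  · linear_combination z12M b c a d mb mc + bM c a b d mc pa mb pd + hskew12 b a c d
  · linear_combination z34M a b c d mc md + z12M b c a d mb mc + z34M c a b d mb md
  · linear_combination z34P a b c d pc pd + z12P b c a d pb pc + z34P c a b d pb pd
  · linear_combination z12P b c a d pb pc + bP c a b d pc ma pb md + hskew12 b a c d
  · linear_combination z12M c a b d mc ma + bM a b c d ma pb mc pd + hskew12 c b a d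
  · linear_combination z34M a b c d mc md + z34M b c a d ma md + z12M c a b d mc ma
  · linear_combination z12M a b c d ma mb + bM b c a d mb pc ma pd + hskew12 a c b d
  · linear_combination z12M a b c d ma mb + z34M b c a d ma md + z34M c a b d mb md
  · linear_combination z12M a b c d ma mb + z12M b c a d mb mc + z12M c a b d mc ma
  · linear_combination z12M a b c d ma mb + z12M b c a d mb mc + z12M c a b d mc ma



set_option maxHeartbeats 1600000 in
/-- A curvature-type tensor (skew in the first two and in the last two slots)
satisfies the first Bianchi identity and the type condition if and only if it
satisfies (1Bnc') and (Cplx'). -/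
theorem statement0
    {Vc : Type*} [AddCommGroup Vc] [Module ℂ Vc]
    -- conjugation on the complexification
    (conj' : Vc → Vc)
    (hconj_add : ∀ x y, conj' (x + y) = conj' x + conj' y)
    (hconj_smul : ∀ (c : ℂ) (x : Vc), conj' (c • x) = (starRingEnd ℂ) c • conj' x)
    (hconj_inv : ∀ x, conj' (conj' x) = x)
    -- the complex structure J (the ℂ-linear extension of a real J with J² = -id),
    -- commuting with conjugation
    (J : Vc →ₗ[ℂ] Vc)
    (hJ2 : ∀ x, J (J x) = -x)
    (hJconj : ∀ x, J (conj' x) = conj' (J x))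
    -- R : the complex-multilinear extension of a real 4-linear tensor
    (R : Vc →ₗ[ℂ] Vc →ₗ[ℂ] Vc →ₗ[ℂ] Vc →ₗ[ℂ] ℂ)
    (hreal : ∀ x y z w, R (conj' x) (conj' y) (conj' z) (conj' w) = (starRingEnd ℂ) (R x y z w))
    (hskew12 : ∀ x y z w, R x y z w = - R y x z w)
    (hskew34 : ∀ x y z w, R x y z w = - R x y w z) :
    -- (first Bianchi identity) and (type condition)
    ((∀ x y z w, R x y z w + R y z x w + R z x y w = 0) ∧
      (∀ x y z w, R x y z w = R x y (J z) (J w) ∧ R x y z w = R (J x) (J y) z w))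
    ↔
    -- (1Bnc')
    ((∀ X Y Z W, J X = Complex.I • X → J Y = Complex.I • Y → J Z = Complex.I • Z →
        J W = Complex.I • W → R X (conj' Y) Z (conj' W) = R Z (conj' Y) X (conj' W)) ∧
    -- (Cplx')
      ((∀ (x y Z W : Vc), J Z = Complex.I • Z → J W = Complex.I • W → R x y Z W = 0) ∧
       (∀ (X Y z w : Vc), J X = Complex.I • X → J Y = Complex.I • Y → R X Y z w = 0))) := by
  -- generic facts about conj'
  have hconj_neg : ∀ x, conj' (-x) = -conj' x := by
    intro x
    have h := hconj_smul (-1) x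
    simpa using h
  have hflip : ∀ x y z w, R x y z w = (starRingEnd ℂ) (R (conj' x) (conj' y) (conj' z) (conj' w)) := by
    intro x y z w
    have h := hreal (conj' x) (conj' y) (conj' z) (conj' w)
    rw [hconj_inv, hconj_inv, hconj_inv, hconj_inv] at h
    exact h
  have hMP : ∀ v, J v = -(Complex.I • v) → J (conj' v) = Complex.I • conj' v := by
    intro v h
    rw [hJconj, h, hconj_neg, hconj_smul, Complex.conj_I, neg_smul, neg_neg]
  have hPM : ∀ v, J v = Complex.I • v → J (conj' v) = -(Complex.I • conj' v) := by
    intro v h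
    rw [hJconj, h, hconj_smul, Complex.conj_I, neg_smul]
  constructor
  · rintro ⟨hBianchi, htype⟩
    -- Cplx' parts first
    have hC1 : ∀ (x y Z W : Vc), J Z = Complex.I • Z → J W = Complex.I • W → R x y Z W = 0 := by
      intro x y Z W hZ hW
      have h := (htype x y Z W).1
      rw [hZ, hW] at h
      simp only [map_smul, LinearMap.smul_apply, smul_eq_mul] at h
      linear_combination h / 2 + (R x y Z W / 2) * Complex.I_mul_I
    have hC2 : ∀ (X Y z w : Vc), J X = Complex.I • X → J Y = Complex.I • Y → R X Y z w = 0 := by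
      intro X Y z w hX hY
      have h := (htype X Y z w).2
      rw [hX, hY] at h
      simp only [map_smul, LinearMap.smul_apply, smul_eq_mul] at h
      linear_combination h / 2 + (R X Y z w / 2) * Complex.I_mul_I
    refine ⟨?_, hC1, hC2⟩
    intro X Y Z W hX hY hZ hW
    have hb := hBianchi X (conj' Y) Z (conj' W)
    have hzero : R Z X (conj' Y) (conj' W) = 0 := hC2 Z X (conj' Y) (conj' W) hZ hX
    have hsk := hskew12 (conj' Y) Z X (conj' W)
    linear_combination hb - hzero - hsk
  · rintro ⟨hB, hC1, hC2⟩
    -- zero lemmas for (0,1)-type slots via reality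
    have z34M : ∀ (x y Z W : Vc), J Z = -(Complex.I • Z) → J W = -(Complex.I • W) →
        R x y Z W = 0 := by
      intro x y Z W hZ hW
      rw [hflip x y Z W, hC1 (conj' x) (conj' y) (conj' Z) (conj' W) (hMP Z hZ) (hMP W hW)]
      simp
    have z12M : ∀ (X Y z w : Vc), J X = -(Complex.I • X) → J Y = -(Complex.I • Y) →
        R X Y z w = 0 := by
      intro X Y z w hX hY
      rw [hflip X Y z w, hC2 (conj' X) (conj' Y) (conj' z) (conj' w) (hMP X hX) (hMP Y hY)]
      simp
    -- Bnc' with honest (0,1) vectors in slots 2,4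
    have bP : ∀ A B C D, J A = Complex.I • A → J B = -(Complex.I • B) →
        J C = Complex.I • C → J D = -(Complex.I • D) → R A B C D = R C B A D := by
      intro A B C D hA hBv hCv hD
      have h := hB A (conj' B) C (conj' D) hA (hMP B hBv) hCv (hMP D hD)
      rwa [hconj_inv B, hconj_inv D] at h
    have bM : ∀ A B C D, J A = -(Complex.I • A) → J B = Complex.I • B →
        J C = -(Complex.I • C) → J D = Complex.I • D → R A B C D = R C B A D := by
      intro A B C D hA hBv hCv hD
      rw [hflip A B C D, hflip C B A D]
      exact congrArg _ (bP (conj' A) (conj' B) (conj' C) (conj' D)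
        (hMP A hA) (hPM B hBv) (hMP C hCv) (hPM D hD))
    set p : Vc → Vc := pPart J with hp
    set q : Vc → Vc := qPart J with hq
    have hpq : ∀ v, p v + q v = v := pPart_add_qPart J
    have hEp : ∀ v, J (p v) = Complex.I • p v := J_pPart J hJ2
    have hEq : ∀ v, J (q v) = -(Complex.I • q v) := J_qPart J hJ2
    have hEOr : ∀ v, (J (p v) = Complex.I • p v ∨ J (p v) = -(Complex.I • p v)) :=
      fun v => Or.inl (hEp v)
    have hEOr' : ∀ v, (J (q v) = Complex.I • q v ∨ J (q v) = -(Complex.I • q v)) :=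
      fun v => Or.inr (hEq v)
    have hz := pureBianchi R (fun v => J v = Complex.I • v) (fun v => J v = -(Complex.I • v))
      hskew12 hC2 z12M hC1 z34M bP bM
    constructor
    · -- first Bianchi identity
      intro x y z w
      have e1 := hz (p x) (p y) (p z) (p w) (hEOr x) (hEOr y) (hEOr z) (hEOr w)
      have e2 := hz (p x) (p y) (p z) (q w) (hEOr x) (hEOr y) (hEOr z) (hEOr' w)
      have e3 := hz (p x) (p y) (q z) (p w) (hEOr x) (hEOr y) (hEOr' z) (hEOr w)
      have e4 := hz (p x) (p y) (q z) (q w) (hEOr x) (hEOr y) (hEOr' z) (hEOr' w)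
      have e5 := hz (p x) (q y) (p z) (p w) (hEOr x) (hEOr' y) (hEOr z) (hEOr w)
      have e6 := hz (p x) (q y) (p z) (q w) (hEOr x) (hEOr' y) (hEOr z) (hEOr' w)
      have e7 := hz (p x) (q y) (q z) (p w) (hEOr x) (hEOr' y) (hEOr' z) (hEOr w)
      have e8 := hz (p x) (q y) (q z) (q w) (hEOr x) (hEOr' y) (hEOr' z) (hEOr' w)
      have e9 := hz (q x) (p y) (p z) (p w) (hEOr' x) (hEOr y) (hEOr z) (hEOr w)
      have e10 := hz (q x) (p y) (p z) (q w) (hEOr' x) (hEOr y) (hEOr z) (hEOr' w)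
      have e11 := hz (q x) (p y) (q z) (p w) (hEOr' x) (hEOr y) (hEOr' z) (hEOr w)
      have e12 := hz (q x) (p y) (q z) (q w) (hEOr' x) (hEOr y) (hEOr' z) (hEOr' w)
      have e13 := hz (q x) (q y) (p z) (p w) (hEOr' x) (hEOr' y) (hEOr z) (hEOr w)
      have e14 := hz (q x) (q y) (p z) (q w) (hEOr' x) (hEOr' y) (hEOr z) (hEOr' w)
      have e15 := hz (q x) (q y) (q z) (p w) (hEOr' x) (hEOr' y) (hEOr' z) (hEOr w)
      have e16 := hz (q x) (q y) (q z) (q w) (hEOr' x) (hEOr' y) (hEOr' z) (hEOr' w)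
      have key : R (p x + q x) (p y + q y) (p z + q z) (p w + q w)
          + R (p y + q y) (p z + q z) (p x + q x) (p w + q w)
          + R (p z + q z) (p x + q x) (p y + q y) (p w + q w) = 0 := by
        simp only [map_add, LinearMap.add_apply]
        linear_combination e1 + e2 + e3 + e4 + e5 + e6 + e7 + e8 + e9 + e10 + e11 + e12 +
          e13 + e14 + e15 + e16
      rwa [hpq x, hpq y, hpq z, hpq w] at key
    · -- type condition
      intro x y z w
      constructor
      · have hJz : J z = Complex.I • (p z - q z) := by
          conv_lhs => rw [← hpq z]
          rw [map_add, hEp z, hEq z, smul_sub]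
          abel
        have hJw : J w = Complex.I • (p w - q w) := by
          conv_lhs => rw [← hpq w]
          rw [map_add, hEp w, hEq w, smul_sub]
          abel
        have e0 := hC1 x y (p z) (p w) (hEp z) (hEp w)
        have e3 := z34M x y (q z) (q w) (hEq z) (hEq w)
        rw [hJz, hJw]
        conv_lhs => rw [← hpq z, ← hpq w]
        simp only [map_add, map_sub, map_smul, LinearMap.add_apply, LinearMap.sub_apply,
          LinearMap.smul_apply, smul_eq_mul]
        linear_combination (2 : ℂ) * e0 + (2 : ℂ) * e3 -
          (R x y (p z) (p w) - R x y (p z) (q w) - R x y (q z) (p w) + R x y (q z) (q w)) *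
            Complex.I_mul_I
      · have hJx : J x = Complex.I • (p x - q x) := by
          conv_lhs => rw [← hpq x]
          rw [map_add, hEp x, hEq x, smul_sub]
          abel
        have hJy : J y = Complex.I • (p y - q y) := by
          conv_lhs => rw [← hpq y]
          rw [map_add, hEp y, hEq y, smul_sub]
          abel
        have e0 := hC2 (p x) (p y) z w (hEp x) (hEp y)
        have e3 := z12M (q x) (q y) z w (hEq x) (hEq y)
        rw [hJx, hJy]
        conv_lhs => rw [← hpq x, ← hpq y]
        simp only [map_add, map_sub, map_smul, LinearMap.add_apply, LinearMap.sub_apply,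
          LinearMap.smul_apply, smul_eq_mul]
        linear_combination (2 : ℂ) * e0 + (2 : ℂ) * e3 -
          (R (p x) (p y) z w - R (p x) (q y) z w - R (q x) (p y) z w + R (q x) (q y) z w) *
            Complex.I_mul_I
end

section
/- Let R be a 4-linear curvature-type tensor on (V,g,J) that is skew-symmetric in the first two arguments and in the last two arguments, and assume R satisfies the type condition (the symmetries automatically enjoyed by the Chern curvature). Then R satisfies the first Bianchi identity if and only if R(X,conj(Y),Z,conj(W)) = R(Z,conj(Y),X,conj(W)) for all vectors X,Y,Z,W of type (1,0) (the Kähler-like condition of Yang–Zheng for the Chern connection). -/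
/-- For a curvature-type tensor satisfying the type condition (the symmetries of
the Chern curvature), the first Bianchi identity is equivalent to the
Kähler-like condition of Yang–Zheng. -/
theorem statement1
    {Vc : Type*} [AddCommGroup Vc] [Module ℂ Vc]
    -- conjugation on the complexification
    (conj' : Vc → Vc)
    (hconj_add : ∀ x y, conj' (x + y) = conj' x + conj' y)
    (hconj_smul : ∀ (c : ℂ) (x : Vc), conj' (c • x) = (starRingEnd ℂ) c • conj' x)
    (hconj_inv : ∀ x, conj' (conj' x) = x)
    -- the complex structure J (the ℂ-linear extension of a real J with J² = -id),
    -- commuting with conjugation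
    (J : Vc →ₗ[ℂ] Vc)
    (hJ2 : ∀ x, J (J x) = -x)
    (hJconj : ∀ x, J (conj' x) = conj' (J x))
    -- R : the complex-multilinear extension of a real 4-linear tensor
    (R : Vc →ₗ[ℂ] Vc →ₗ[ℂ] Vc →ₗ[ℂ] Vc →ₗ[ℂ] ℂ)
    (hreal : ∀ x y z w, R (conj' x) (conj' y) (conj' z) (conj' w) = (starRingEnd ℂ) (R x y z w))
    (hskew12 : ∀ x y z w, R x y z w = - R y x z w)
    (hskew34 : ∀ x y z w, R x y z w = - R x y w z)
    -- the type condition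
    (htype : ∀ x y z w, R x y z w = R x y (J z) (J w) ∧ R x y z w = R (J x) (J y) z w) :
    (∀ x y z w, R x y z w + R y z x w + R z x y w = 0)
    ↔
    (∀ X Y Z W, J X = Complex.I • X → J Y = Complex.I • Y → J Z = Complex.I • Z →
        J W = Complex.I • W → R X (conj' Y) Z (conj' W) = R Z (conj' Y) X (conj' W)) := by
  -- vanishing when the first pair consists of two (1,0)-vectors
  have z12pp : ∀ x y z w, J x = Complex.I • x → J y = Complex.I • y → R x y z w = 0 := by
    intro x y z w hx hy
    have h := (htype x y z w).2
    rw [hx, hy] at h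
    simp only [map_smul, LinearMap.smul_apply, smul_eq_mul] at h
    linear_combination h / 2 + (R x y z w / 2) * Complex.I_mul_I
  -- vanishing when the first pair consists of two (0,1)-vectors
  have z12mm : ∀ x y z w, J x = -(Complex.I • x) → J y = -(Complex.I • y) → R x y z w = 0 := by
    intro x y z w hx hy
    have h := (htype x y z w).2
    rw [hx, hy] at h
    simp only [map_neg, map_smul, LinearMap.neg_apply, LinearMap.smul_apply, smul_eq_mul] at h
    linear_combination h / 2 + (R x y z w / 2) * Complex.I_mul_I
  -- vanishing when the last pair consists of two (1,0)-vectors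
  have z34pp : ∀ x y z w, J z = Complex.I • z → J w = Complex.I • w → R x y z w = 0 := by
    intro x y z w hz hw
    have h := (htype x y z w).1
    rw [hz, hw] at h
    simp only [map_smul, LinearMap.smul_apply, smul_eq_mul] at h
    linear_combination h / 2 + (R x y z w / 2) * Complex.I_mul_I
  -- vanishing when the last pair consists of two (0,1)-vectors
  have z34mm : ∀ x y z w, J z = -(Complex.I • z) → J w = -(Complex.I • w) → R x y z w = 0 := by
    intro x y z w hz hw
    have h := (htype x y z w).1
    rw [hz, hw] at h
    simp only [map_neg, map_smul, LinearMap.neg_apply, LinearMap.smul_apply, smul_eq_mul] at h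
    linear_combination h / 2 + (R x y z w / 2) * Complex.I_mul_I
  -- conjugation swaps types
  have hconj_neg : ∀ x, conj' (-x) = - conj' x := by
    intro x
    rw [← neg_one_smul ℂ x, hconj_smul]
    simp
  have cP : ∀ v, J v = -(Complex.I • v) → J (conj' v) = Complex.I • conj' v := by
    intro v hv
    rw [hJconj, hv, hconj_neg, hconj_smul, Complex.conj_I, neg_smul, neg_neg]
  have cM : ∀ v, J v = Complex.I • v → J (conj' v) = -(Complex.I • conj' v) := by
    intro v hv
    rw [hJconj, hv, hconj_smul, Complex.conj_I, neg_smul]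
  constructor
  · -- Bianchi ⇒ Kähler-like
    intro hB X Y Z W hX hY hZ hW
    have hb := hB X (conj' Y) Z (conj' W)
    have t3 : R Z X (conj' Y) (conj' W) = 0 := z12pp Z X _ _ hZ hX
    have t2 := hskew12 (conj' Y) Z X (conj' W)
    linear_combination hb - t2 - t3
  · -- Kähler-like ⇒ Bianchi
    intro hK
    -- the Kähler-like symmetry, pure-type versions
    have key1 : ∀ a b c w, J a = Complex.I • a → J b = -(Complex.I • b) →
        J c = Complex.I • c → J w = -(Complex.I • w) → R a b c w = R c b a w := by
      intro a b c w ha hb hc hw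
      have h := hK a (conj' b) c (conj' w) ha (cP b hb) hc (cP w hw)
      rwa [hconj_inv, hconj_inv] at h
    have key2 : ∀ a b c w, J a = -(Complex.I • a) → J b = Complex.I • b →
        J c = -(Complex.I • c) → J w = Complex.I • w → R a b c w = R c b a w := by
      intro a b c w ha hb hc hw
      have h := hK (conj' a) b (conj' c) w (cP a ha) hb (cP c hc) hw
      apply (starRingEnd ℂ).injective
      rw [← hreal, ← hreal]
      exact h
    -- Bianchi sum for pure-type triples of pattern (+,-,+)
    have Lpmp : ∀ a b c w, J a = Complex.I • a → J b = -(Complex.I • b) →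
        J c = Complex.I • c →
        (J w = Complex.I • w ∨ J w = -(Complex.I • w)) →
        R a b c w + R b c a w + R c a b w = 0 := by
      intro a b c w ha hb hc hw
      rcases hw with hw | hw
      · rw [z34pp a b c w hc hw, z34pp b c a w ha hw, z12pp c a b w hc ha]; ring
      · have t := key1 a b c w ha hb hc hw
        have t2 := hskew12 b c a w
        have t3 := z12pp c a b w hc ha
        linear_combination t + t2 + t3
    -- Bianchi sum for pure-type triples of pattern (-,+,-)
    have Lmpm : ∀ a b c w, J a = -(Complex.I • a) → J b = Complex.I • b →
        J c = -(Complex.I • c) →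
        (J w = Complex.I • w ∨ J w = -(Complex.I • w)) →
        R a b c w + R b c a w + R c a b w = 0 := by
      intro a b c w ha hb hc hw
      rcases hw with hw | hw
      · have t := key2 a b c w ha hb hc hw
        have t2 := hskew12 b c a w
        have t3 := z12mm c a b w hc ha
        linear_combination t + t2 + t3
      · rw [z34mm a b c w hc hw, z34mm b c a w ha hw, z12mm c a b w hc ha]; ring
    -- Bianchi sum for all pure-type quadruples
    have hfin : ∀ a b c w, (J a = Complex.I • a ∨ J a = -(Complex.I • a)) →
        (J b = Complex.I • b ∨ J b = -(Complex.I • b)) →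
        (J c = Complex.I • c ∨ J c = -(Complex.I • c)) →
        (J w = Complex.I • w ∨ J w = -(Complex.I • w)) →
        R a b c w + R b c a w + R c a b w = 0 := by
      intro a b c w ha hb hc hw
      rcases ha with ha | ha <;> rcases hb with hb | hb <;> rcases hc with hc | hc
      · rw [z12pp a b c w ha hb, z12pp b c a w hb hc, z12pp c a b w hc ha]; ring
      · linear_combination Lpmp b c a w hb hc ha hw
      · exact Lpmp a b c w ha hb hc hw
      · linear_combination Lmpm c a b w hc ha hb hw
      · linear_combination Lpmp c a b w hc ha hb hw
      · exact Lmpm a b c w ha hb hc hw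
      · linear_combination Lmpm b c a w hb hc ha hw
      · rw [z12mm a b c w ha hb, z12mm b c a w hb hc, z12mm c a b w hc ha]; ring
    -- decomposition into pure types
    have hPv : ∀ v : Vc, J ((2⁻¹:ℂ) • (v - Complex.I • J v))
        = Complex.I • ((2⁻¹:ℂ) • (v - Complex.I • J v)) := by
      intro v
      rw [map_smul, map_sub, map_smul, hJ2]
      match_scalars
      · linear_combination (2⁻¹:ℂ) * Complex.I_mul_I
      · ring
    have hMv : ∀ v : Vc, J ((2⁻¹:ℂ) • (v + Complex.I • J v))
        = -(Complex.I • ((2⁻¹:ℂ) • (v + Complex.I • J v))) := by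
      intro v
      rw [map_smul, map_add, map_smul, hJ2]
      match_scalars
      · linear_combination (2⁻¹:ℂ) * Complex.I_mul_I
      · ring
    have hsum : ∀ v : Vc,
        (2⁻¹:ℂ) • (v - Complex.I • J v) + (2⁻¹:ℂ) • (v + Complex.I • J v) = v := by
      intro v; module
    have hpure : ∀ v : Vc, (J ((2⁻¹:ℂ) • (v - Complex.I • J v))
          = Complex.I • ((2⁻¹:ℂ) • (v - Complex.I • J v))
        ∨ J ((2⁻¹:ℂ) • (v - Complex.I • J v))
          = -(Complex.I • ((2⁻¹:ℂ) • (v - Complex.I • J v)))) := fun v => Or.inl (hPv v)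
    have hpure' : ∀ v : Vc, (J ((2⁻¹:ℂ) • (v + Complex.I • J v))
          = Complex.I • ((2⁻¹:ℂ) • (v + Complex.I • J v))
        ∨ J ((2⁻¹:ℂ) • (v + Complex.I • J v))
          = -(Complex.I • ((2⁻¹:ℂ) • (v + Complex.I • J v)))) := fun v => Or.inr (hMv v)
    -- expand multilinearly, slot by slot
    have step4 : ∀ a b c, (J a = Complex.I • a ∨ J a = -(Complex.I • a)) →
        (J b = Complex.I • b ∨ J b = -(Complex.I • b)) →
        (J c = Complex.I • c ∨ J c = -(Complex.I • c)) →
        ∀ d, R a b c d + R b c a d + R c a b d = 0 := by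
      intro a b c ha hb hc d
      rw [← hsum d]
      simp only [map_add, LinearMap.add_apply]
      linear_combination hfin a b c _ ha hb hc (hpure d) + hfin a b c _ ha hb hc (hpure' d)
    have step3 : ∀ a b, (J a = Complex.I • a ∨ J a = -(Complex.I • a)) →
        (J b = Complex.I • b ∨ J b = -(Complex.I • b)) →
        ∀ c d, R a b c d + R b c a d + R c a b d = 0 := by
      intro a b ha hb c d
      rw [← hsum c]
      simp only [map_add, LinearMap.add_apply]
      linear_combination step4 a b _ ha hb (hpure c) d + step4 a b _ ha hb (hpure' c) d
    have step2 : ∀ a, (J a = Complex.I • a ∨ J a = -(Complex.I • a)) →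
        ∀ b c d, R a b c d + R b c a d + R c a b d = 0 := by
      intro a ha b c d
      rw [← hsum b]
      simp only [map_add, LinearMap.add_apply]
      linear_combination step3 a _ ha (hpure b) c d + step3 a _ ha (hpure' b) c d
    intro x y z w
    rw [← hsum x]
    simp only [map_add, LinearMap.add_apply]
    linear_combination step2 _ (hpure x) y z w + step2 _ (hpure' x) y z w
end

section
/- Let R be a 4-linear curvature-type tensor on (V,g,J) that is skew-symmetric in the first two arguments and in the last two arguments, and assume R satisfies the first Bianchi identity (the symmetry automatically enjoyed by the Levi-Civita curvature). Then R satisfies the type condition if and only if R(X,Y,Z,W) = R(X,Y,Z,conj(W)) = R(X,Y,conj(Z),conj(W)) = 0 for all vectors X,Y,Z,W of type (1,0) (the G-Kähler-like condition of Gray and Yang–Zheng together with Gray's vanishing). -/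
set_option maxHeartbeats 1000000 in
/-- For a curvature-type tensor satisfying the first Bianchi identity (the
symmetry of the Levi-Civita curvature), the type condition is equivalent to the
G-Kähler-like condition of Gray and Yang–Zheng together with Gray's vanishing. -/
theorem statement2
    {Vc : Type*} [AddCommGroup Vc] [Module ℂ Vc]
    -- conjugation on the complexification
    (conj' : Vc → Vc)
    (hconj_add : ∀ x y, conj' (x + y) = conj' x + conj' y)
    (hconj_smul : ∀ (c : ℂ) (x : Vc), conj' (c • x) = (starRingEnd ℂ) c • conj' x)
    (hconj_inv : ∀ x, conj' (conj' x) = x)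
    -- the complex structure J (the ℂ-linear extension of a real J with J² = -id),
    -- commuting with conjugation
    (J : Vc →ₗ[ℂ] Vc)
    (hJ2 : ∀ x, J (J x) = -x)
    (hJconj : ∀ x, J (conj' x) = conj' (J x))
    -- R : the complex-multilinear extension of a real 4-linear tensor
    (R : Vc →ₗ[ℂ] Vc →ₗ[ℂ] Vc →ₗ[ℂ] Vc →ₗ[ℂ] ℂ)
    (hreal : ∀ x y z w, R (conj' x) (conj' y) (conj' z) (conj' w) = (starRingEnd ℂ) (R x y z w))
    (hskew12 : ∀ x y z w, R x y z w = - R y x z w)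
    (hskew34 : ∀ x y z w, R x y z w = - R x y w z)
    -- the first Bianchi identity
    (hbianchi : ∀ x y z w, R x y z w + R y z x w + R z x y w = 0) :
    (∀ x y z w, R x y z w = R x y (J z) (J w) ∧ R x y z w = R (J x) (J y) z w)
    ↔
    (∀ X Y Z W, J X = Complex.I • X → J Y = Complex.I • Y → J Z = Complex.I • Z →
        J W = Complex.I • W →
        R X Y Z W = 0 ∧ R X Y Z (conj' W) = 0 ∧ R X Y (conj' Z) (conj' W) = 0) := by
  constructor
  · -- forward direction
    intro hT X Y Z W hX hY _ _
    have key : ∀ z w, R X Y z w = 0 := by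
      intro z w
      have h1 := (hT X Y z w).2
      rw [hX, hY] at h1
      simp only [map_smul, LinearMap.smul_apply, smul_eq_mul] at h1
      linear_combination h1/2 + (R X Y z w)/2 * Complex.I_mul_I
    exact ⟨key Z W, key Z (conj' W), key (conj' Z) (conj' W)⟩
  · -- backward direction
    intro h
    -- basic facts about conj'
    have hcneg : ∀ x, conj' (-x) = - conj' x := by
      intro x
      have := hconj_smul (-1) x
      simpa using this
    have hcsub : ∀ x y, conj' (x - y) = conj' x - conj' y := by
      intro x y
      rw [sub_eq_add_neg, hconj_add, hcneg, sub_eq_add_neg]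
    -- the (1,0)-projection
    obtain ⟨p, hTp, hdec⟩ : ∃ p : Vc → Vc, (∀ v, J (p v) = Complex.I • p v) ∧
        (∀ v, v = p v + conj' (p (conj' v))) := by
      refine ⟨fun v => (2:ℂ)⁻¹ • (v - Complex.I • J v), fun v => ?_, fun v => ?_⟩
      · simp only
        rw [map_smul, map_sub, map_smul, hJ2]
        match_scalars <;>
          first
            | ring1
            | linear_combination Complex.I_mul_I
            | linear_combination ((1:ℂ)/2) * Complex.I_mul_I
            | linear_combination (-(1:ℂ)/2) * Complex.I_mul_I
            | linear_combination (-(1:ℂ)) * Complex.I_mul_I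
      · simp only
        rw [hJconj, hconj_smul, hcsub, hconj_inv, hconj_smul, hconj_inv, Complex.conj_I]
        have h2 : (starRingEnd ℂ) (2:ℂ)⁻¹ = (2:ℂ)⁻¹ := by
          simp [map_inv₀, Complex.conj_ofNat]
        rw [h2]
        module
    have hJdec : ∀ v, J v = Complex.I • p v - Complex.I • conj' (p (conj' v)) := by
      intro v
      conv_lhs => rw [hdec v]
      rw [map_add, hTp, hJconj, hTp, hconj_smul, Complex.conj_I, neg_smul, ← sub_eq_add_neg]
    -- conjugation of a vanishing
    have hconj0 : ∀ x y z w, R x y z w = 0 →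
        R (conj' x) (conj' y) (conj' z) (conj' w) = 0 := by
      intro x y z w h0
      rw [hreal, h0]
      simp
    -- pattern (+,+,-,+)
    have hZ4 : ∀ X Y Z W, J X = Complex.I • X → J Y = Complex.I • Y → J Z = Complex.I • Z →
        J W = Complex.I • W → R X Y (conj' Z) W = 0 := by
      intro X Y Z W hX hY hZ hW
      rw [hskew34 X Y (conj' Z) W, (h X Y W Z hX hY hW hZ).2.1, neg_zero]
    -- patterns (-,-,*,*)
    have hmm1 : ∀ X Y Z W, J X = Complex.I • X → J Y = Complex.I • Y → J Z = Complex.I • Z →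
        J W = Complex.I • W → R (conj' X) (conj' Y) Z W = 0 := by
      intro X Y Z W hX hY hZ hW
      have := hconj0 X Y (conj' Z) (conj' W) (h X Y Z W hX hY hZ hW).2.2
      rwa [hconj_inv, hconj_inv] at this
    have hmm2 : ∀ X Y Z W, J X = Complex.I • X → J Y = Complex.I • Y → J Z = Complex.I • Z →
        J W = Complex.I • W → R (conj' X) (conj' Y) Z (conj' W) = 0 := by
      intro X Y Z W hX hY hZ hW
      have := hconj0 X Y (conj' Z) W (hZ4 X Y Z W hX hY hZ hW)
      rwa [hconj_inv] at this
    have hmm3 : ∀ X Y Z W, J X = Complex.I • X → J Y = Complex.I • Y → J Z = Complex.I • Z →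
        J W = Complex.I • W → R (conj' X) (conj' Y) (conj' Z) W = 0 := by
      intro X Y Z W hX hY hZ hW
      have := hconj0 X Y Z (conj' W) (h X Y Z W hX hY hZ hW).2.1
      rwa [hconj_inv] at this
    have hmm4 : ∀ X Y Z W, J X = Complex.I • X → J Y = Complex.I • Y → J Z = Complex.I • Z →
        J W = Complex.I • W → R (conj' X) (conj' Y) (conj' Z) (conj' W) = 0 := by
      intro X Y Z W hX hY hZ hW
      exact hconj0 X Y Z W (h X Y Z W hX hY hZ hW).1
    -- the symmetry from the Bianchi identity
    have hsym : ∀ Y A B W, J Y = Complex.I • Y → J A = Complex.I • A → J B = Complex.I • B →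
        J W = Complex.I • W → R A (conj' Y) B W = R B (conj' Y) A W := by
      intro Y A B W hY hA hB hW
      have hb := hbianchi A (conj' Y) B W
      have h3 : R B A (conj' Y) W = 0 := hZ4 B A Y W hB hA hY hW
      have h2 : R (conj' Y) B A W = - R B (conj' Y) A W := hskew12 _ _ _ _
      linear_combination hb - h2 - h3
    -- pattern (+,-,+,+)
    have hZA : ∀ X Y Z W, J X = Complex.I • X → J Y = Complex.I • Y → J Z = Complex.I • Z →
        J W = Complex.I • W → R X (conj' Y) Z W = 0 := by
      intro X Y Z W hX hY hZ hW
      have e1 := hsym Y X Z W hY hX hZ hW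
      have e2 := hskew34 Z (conj' Y) X W
      have e3 := hsym Y Z W X hY hZ hW hX
      have e4 := hskew34 W (conj' Y) Z X
      have e5 := hsym Y W X Z hY hW hX hZ
      have e6 := hskew34 X (conj' Y) W Z
      linear_combination (e1 + e2 - e3 - e4 + e5 + e6)/2
    -- pattern (-,+,+,+)
    have hZA' : ∀ X Y Z W, J X = Complex.I • X → J Y = Complex.I • Y → J Z = Complex.I • Z →
        J W = Complex.I • W → R (conj' X) Y Z W = 0 := by
      intro X Y Z W hX hY hZ hW
      rw [hskew12 (conj' X) Y Z W, hZA Y X Z W hY hX hZ hW, neg_zero]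
    -- pattern (+,-,-,-)
    have hZk : ∀ X Y Z W, J X = Complex.I • X → J Y = Complex.I • Y → J Z = Complex.I • Z →
        J W = Complex.I • W → R X (conj' Y) (conj' Z) (conj' W) = 0 := by
      intro X Y Z W hX hY hZ hW
      have := hconj0 (conj' X) Y Z W (hZA' X Y Z W hX hY hZ hW)
      rwa [hconj_inv] at this
    -- pattern (-,+,-,-)
    have hZl : ∀ X Y Z W, J X = Complex.I • X → J Y = Complex.I • Y → J Z = Complex.I • Z →
        J W = Complex.I • W → R (conj' X) Y (conj' Z) (conj' W) = 0 := by
      intro X Y Z W hX hY hZ hW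
      rw [hskew12 (conj' X) Y (conj' Z) (conj' W), hZk Y X Z W hY hX hZ hW, neg_zero]
    -- main vanishing lemmas
    have lemA : ∀ Z W, J Z = Complex.I • Z → J W = Complex.I • W →
        ∀ x y, R x y Z W = 0 := by
      intro Z W hZ hW x y
      conv_lhs => rw [hdec x, hdec y]
      simp only [map_add, LinearMap.add_apply]
      rw [(h (p x) (p y) Z W (hTp x) (hTp y) hZ hW).1,
        hZA (p x) (p (conj' y)) Z W (hTp x) (hTp _) hZ hW,
        hZA' (p (conj' x)) (p y) Z W (hTp _) (hTp y) hZ hW,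
        hmm1 (p (conj' x)) (p (conj' y)) Z W (hTp _) (hTp _) hZ hW]
      ring
    have lemA' : ∀ Z W, J Z = Complex.I • Z → J W = Complex.I • W →
        ∀ x y, R x y (conj' Z) (conj' W) = 0 := by
      intro Z W hZ hW x y
      conv_lhs => rw [hdec x, hdec y]
      simp only [map_add, LinearMap.add_apply]
      rw [(h (p x) (p y) Z W (hTp x) (hTp y) hZ hW).2.2,
        hZk (p x) (p (conj' y)) Z W (hTp x) (hTp _) hZ hW,
        hZl (p (conj' x)) (p y) Z W (hTp _) (hTp y) hZ hW,
        hmm4 (p (conj' x)) (p (conj' y)) Z W (hTp _) (hTp _) hZ hW]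
      ring
    have lemB : ∀ X Y, J X = Complex.I • X → J Y = Complex.I • Y →
        ∀ z w, R X Y z w = 0 := by
      intro X Y hX hY z w
      conv_lhs => rw [hdec z, hdec w]
      simp only [map_add, LinearMap.add_apply]
      rw [(h X Y (p z) (p w) hX hY (hTp z) (hTp w)).1,
        (h X Y (p z) (p (conj' w)) hX hY (hTp z) (hTp _)).2.1,
        hZ4 X Y (p (conj' z)) (p w) hX hY (hTp _) (hTp w),
        (h X Y (p (conj' z)) (p (conj' w)) hX hY (hTp _) (hTp _)).2.2]
      ring
    have lemB' : ∀ X Y, J X = Complex.I • X → J Y = Complex.I • Y →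
        ∀ z w, R (conj' X) (conj' Y) z w = 0 := by
      intro X Y hX hY z w
      conv_lhs => rw [hdec z, hdec w]
      simp only [map_add, LinearMap.add_apply]
      rw [hmm1 X Y (p z) (p w) hX hY (hTp z) (hTp w),
        hmm2 X Y (p z) (p (conj' w)) hX hY (hTp z) (hTp _),
        hmm3 X Y (p (conj' z)) (p w) hX hY (hTp _) (hTp w),
        hmm4 X Y (p (conj' z)) (p (conj' w)) hX hY (hTp _) (hTp _)]
      ring
    -- the two identities
    intro x y z w
    constructor
    · have eL : R x y z w =
          R x y (p z) (p w) + R x y (p z) (conj' (p (conj' w)))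
          + R x y (conj' (p (conj' z))) (p w)
          + R x y (conj' (p (conj' z))) (conj' (p (conj' w))) := by
        conv_lhs => rw [hdec z, hdec w]
        simp only [map_add, LinearMap.add_apply]
        ring
      have eR : R x y (J z) (J w) =
          Complex.I * Complex.I * R x y (p z) (p w)
          - Complex.I * Complex.I * R x y (p z) (conj' (p (conj' w)))
          - Complex.I * Complex.I * R x y (conj' (p (conj' z))) (p w)
          + Complex.I * Complex.I * R x y (conj' (p (conj' z))) (conj' (p (conj' w))) := by
        rw [hJdec z, hJdec w]
        simp only [map_add, map_sub, map_smul, LinearMap.add_apply, LinearMap.sub_apply,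
          LinearMap.smul_apply, smul_eq_mul]
        ring
      rw [eL, eR, lemA (p z) (p w) (hTp z) (hTp w) x y,
        lemA' (p (conj' z)) (p (conj' w)) (hTp _) (hTp _) x y, Complex.I_mul_I]
      ring
    · have eL : R x y z w =
          R (p x) (p y) z w + R (p x) (conj' (p (conj' y))) z w
          + R (conj' (p (conj' x))) (p y) z w
          + R (conj' (p (conj' x))) (conj' (p (conj' y))) z w := by
        conv_lhs => rw [hdec x, hdec y]
        simp only [map_add, LinearMap.add_apply]
        ring
      have eR : R (J x) (J y) z w =
          Complex.I * Complex.I * R (p x) (p y) z w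
          - Complex.I * Complex.I * R (p x) (conj' (p (conj' y))) z w
          - Complex.I * Complex.I * R (conj' (p (conj' x))) (p y) z w
          + Complex.I * Complex.I * R (conj' (p (conj' x))) (conj' (p (conj' y))) z w := by
        rw [hJdec x, hJdec y]
        simp only [map_add, map_sub, map_smul, LinearMap.add_apply, LinearMap.sub_apply,
          LinearMap.smul_apply, smul_eq_mul]
        ring
      rw [eL, eR, lemB (p x) (p y) (hTp x) (hTp y) z w,
        lemB' (p (conj' x)) (p (conj' y)) (hTp _) (hTp _) z w, Complex.I_mul_I]
      ring
end
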